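/- Let k and l be positive integers with k < l, and let s be a real number with 0 < s < 1. Then Σ_{n=0}^∞ (1/(2nl + k)^s − 1/((2n+2)l − k)^s) = ((π/l)^s/(sin(sπ/2)·Γ(s))) · Σ_{n=1}^∞ sin(nkπ/l)/n^{1−s}, where the series on the right converges (conditionally) and the series on the left converges absolutely. -/

import Mathlib

open Real Filter Finset
open scoped Topology

/-!
Write `a = k / (2 l)`. The left series is `(2 l)^(-s)` times `∑ ((n + a)^(-s) - (n + 1 - a)^(-s))`,
which is `2 ζ_odd(a, s)`, and the right series is the sine zeta function
`∑ sin (2 π a n) n^(s - 1) = S(a, 1 - s)`; the functional equation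
`S(a, 1 - s) = 2 (2 π)^(-s) Γ(s) sin (π s / 2) ζ_odd(a, s)` then gives the identity.

Both Dirichlet series are a priori identified with these functions only for `re > 1`, and are
extended to `re > 0` by the identity theorem. For this, terms are grouped so that the series of
holomorphic functions converges normally on compacts: in pairs for `ζ_odd`, and in blocks of one
period `2 l` of the coefficients for `S`, whose sum over a period vanishes. The mean value theorem
then bounds the `m`-th group by `O(m^(-re w - 1))`.
-/

lemma norm_one_div_ofReal_cpow_sub_le {c x y : ℝ} (hc : 0 < c) (hx : c ≤ x) (hy : c ≤ y) {w : ℂ}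
    (hw : -1 ≤ w.re) :
    ‖1 / (x : ℂ) ^ w - 1 / (y : ℂ) ^ w‖ ≤ ‖w‖ * c ^ (-w.re - 1) * |x - y| := by
  simp_rw [one_div, ← Complex.cpow_neg]
  have hderiv : ∀ t ∈ Set.Ici c, HasDerivWithinAt (fun t : ℝ ↦ (t : ℂ) ^ (-w))
      (-w * (t : ℂ) ^ (-w - 1)) (Set.Ici c) t := fun t ht ↦
    ((Complex.hasStrictDerivAt_cpow_const
      (Complex.ofReal_mem_slitPlane.2 (hc.trans_le ht))).hasDerivAt.comp_ofReal).hasDerivWithinAt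
  have hbound : ∀ t ∈ Set.Ici c, ‖-w * (t : ℂ) ^ (-w - 1)‖ ≤ ‖w‖ * c ^ (-w.re - 1) := by
    intro t (ht : c ≤ t)
    rw [norm_mul, norm_neg, Complex.norm_cpow_eq_rpow_re_of_pos (hc.trans_le ht)]
    gcongr
    simpa using Real.rpow_le_rpow_of_nonpos hc ht (by linarith : -w.re - 1 ≤ 0)
  simpa [norm_sub_rev, Real.norm_eq_abs, abs_sub_comm] using
    (convex_Ici c).norm_image_sub_le_of_norm_hasDerivWithin_le hderiv hbound hy hx

lemma summable_nat_add_one_rpow {p : ℝ} (hp : p < -1) :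
    Summable fun n : ℕ ↦ ((n : ℝ) + 1) ^ p := by
  simpa using (summable_nat_add_iff 1).2 (Real.summable_nat_rpow.2 hp)

lemma differentiable_one_div_cpow_sub {x y : ℝ} (hx : 0 < x) (hy : 0 < y) :
    Differentiable ℂ fun w : ℂ ↦ 1 / (x : ℂ) ^ w - 1 / (y : ℂ) ^ w := by
  simp_rw [one_div, ← Complex.cpow_neg]
  exact (differentiable_neg.const_cpow (.inl (Complex.ofReal_ne_zero.2 hx.ne'))).sub
    (differentiable_neg.const_cpow (.inl (Complex.ofReal_ne_zero.2 hy.ne')))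

section HalfPlane

variable {f : ℕ → ℂ → ℂ} {C : ℝ}

lemma norm_le_of_mem_re_gt_inter_ball
    (hbound : ∀ n w, 0 < w.re → ‖f n w‖ ≤ C * ‖w‖ * ((n : ℝ) + 1) ^ (-w.re - 1))
    {r M : ℝ} (hr : 0 < r) (n : ℕ) {w : ℂ} (hw : w ∈ {w : ℂ | r < w.re} ∩ Metric.ball 0 M) :
    ‖f n w‖ ≤ |C| * M * ((n : ℝ) + 1) ^ (-r - 1) := by
  obtain ⟨hwr : r < w.re, hwM⟩ := hw
  rw [mem_ball_zero_iff] at hwM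
  calc ‖f n w‖ ≤ C * ‖w‖ * ((n : ℝ) + 1) ^ (-w.re - 1) := hbound n w (hr.trans hwr)
    _ ≤ |C| * ‖w‖ * ((n : ℝ) + 1) ^ (-w.re - 1) := by gcongr; exact le_abs_self C
    _ ≤ |C| * M * ((n : ℝ) + 1) ^ (-r - 1) := by
      gcongr
      · exact mul_nonneg (abs_nonneg C) ((norm_nonneg w).trans hwM.le)
      · exact le_add_of_nonneg_left (Nat.cast_nonneg (α := ℝ) n)

lemma summable_of_norm_le_rpow
    (hbound : ∀ n w, 0 < w.re → ‖f n w‖ ≤ C * ‖w‖ * ((n : ℝ) + 1) ^ (-w.re - 1))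
    {w : ℂ} (hw : 0 < w.re) : Summable fun n ↦ f n w :=
  .of_norm_bounded ((summable_nat_add_one_rpow (p := -w.re - 1) (by linarith)).mul_left _)
    fun n ↦ hbound n w hw

lemma differentiableOn_tsum_of_norm_le_rpow (hf : ∀ n, DifferentiableOn ℂ (f n) {w | 0 < w.re})
    (hbound : ∀ n w, 0 < w.re → ‖f n w‖ ≤ C * ‖w‖ * ((n : ℝ) + 1) ^ (-w.re - 1)) :
    DifferentiableOn ℂ (fun w ↦ ∑' n, f n w) {w | 0 < w.re} := by
  intro w₀ (hw₀ : 0 < w₀.re)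
  set U := {w : ℂ | w₀.re / 2 < w.re} ∩ Metric.ball 0 (‖w₀‖ + 1)
  have hU : IsOpen U := (isOpen_lt continuous_const Complex.continuous_re).inter Metric.isOpen_ball
  have hw₀U : w₀ ∈ U := ⟨show w₀.re / 2 < w₀.re by linarith, by simp⟩
  have hUsub : U ⊆ {w | 0 < w.re} := fun w hw ↦ show 0 < w.re by linarith [hw.1.out]
  refine (DifferentiableOn.differentiableAt ?_ (hU.mem_nhds hw₀U)).differentiableWithinAt
  exact Complex.differentiableOn_tsum_of_summable_norm
    ((summable_nat_add_one_rpow (by linarith)).mul_left _) (fun n ↦ (hf n).mono hUsub) hU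
    fun n w hw ↦ norm_le_of_mem_re_gt_inter_ball hbound (by linarith) n hw

theorem hasSum_of_forall_one_lt_re {g : ℂ → ℂ}
    (hf : ∀ n, DifferentiableOn ℂ (f n) {w | 0 < w.re}) (hg : DifferentiableOn ℂ g {w | 0 < w.re})
    (hbound : ∀ n w, 0 < w.re → ‖f (n + 1) w‖ ≤ C * ‖w‖ * ((n : ℝ) + 1) ^ (-w.re - 1))
    (h : ∀ w, 1 < w.re → HasSum (fun n ↦ f n w) (g w)) {w : ℂ} (hw : 0 < w.re) :
    HasSum (fun n ↦ f n w) (g w) := by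
  set F : ℂ → ℂ := fun w ↦ f 0 w + ∑' n, f (n + 1) w
  have hU : IsOpen {w : ℂ | 0 < w.re} := isOpen_lt continuous_const Complex.continuous_re
  have hFg : ∀ w, 1 < w.re → F w = g w := fun w hw ↦
    ((h w hw).summable.tsum_eq_zero_add).symm.trans (h w hw).tsum_eq
  have hFg_nhds : F =ᶠ[𝓝 2] g := eventually_of_mem
    ((isOpen_lt continuous_const Complex.continuous_re).mem_nhds (by norm_num)) hFg
  have hF : DifferentiableOn ℂ F {w | 0 < w.re} :=
    (hf 0).add (differentiableOn_tsum_of_norm_le_rpow (fun n ↦ hf (n + 1)) hbound)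
  have hFg_eqOn := (hF.analyticOnNhd hU).eqOn_of_preconnected_of_eventuallyEq (hg.analyticOnNhd hU)
    (convex_halfSpace_re_gt 0).isPreconnected (by norm_num) hFg_nhds
  rw [← hasSum_nat_add_iff' 1, ← hFg_eqOn hw]
  simpa [F] using (summable_of_norm_le_rpow hbound hw).hasSum

end HalfPlane

section Blocks

variable {E : Type*} [SeminormedAddCommGroup E]

lemma sum_range_mul_eq_sum_sum (f : ℕ → E) (m N : ℕ) :
    ∑ n ∈ range (m * N), f n = ∑ i ∈ range m, ∑ j ∈ range N, f (i * N + j) := by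
  induction m with
  | zero => simp
  | succ m ih => rw [add_mul, one_mul, sum_range_add, ih, sum_range_succ]

lemma tendsto_sum_range_of_tendsto_sum_range_mul {f : ℕ → E} {N : ℕ} (hN : 0 < N) {L : E}
    (hf : Tendsto f atTop (𝓝 0)) (h : Tendsto (fun m ↦ ∑ n ∈ range (m * N), f n) atTop (𝓝 L)) :
    Tendsto (fun M ↦ ∑ n ∈ range M, f n) atTop (𝓝 L) := by
  have hq : Tendsto (· / N) atTop atTop := Nat.tendsto_div_const_atTop hN.ne'
  have hrem : Tendsto (fun M ↦ ∑ j ∈ range (M % N), f (M / N * N + j)) atTop (𝓝 0) := by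
    refine squeeze_zero_norm (fun M ↦ (norm_sum_le _ _).trans (sum_le_sum_of_subset_of_nonneg
      (range_mono (Nat.mod_lt M hN).le) fun _ _ _ ↦ norm_nonneg _)) ?_
    simpa using tendsto_finsetSum (range N) fun j _ ↦ (tendsto_norm_zero.comp hf).comp
      ((tendsto_add_atTop_nat j).comp ((tendsto_id.atTop_mul_const' hN).comp hq))
  refine (add_zero L ▸ (h.comp hq).add hrem).congr fun M ↦ ?_
  simp only [Function.comp_apply, ← sum_range_add, Nat.div_add_mod']

end Blocks

lemma differentiableOn_div_natCast_cpow (z : ℂ) (n : ℕ) :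
    DifferentiableOn ℂ (fun w : ℂ ↦ z / (n : ℂ) ^ w) {w | 0 < w.re} := by
  rcases eq_or_ne n 0 with rfl | hn
  · refine (differentiableOn_const 0).congr fun w (hw : 0 < w.re) ↦ ?_
    simp [Complex.zero_cpow (Complex.ne_zero_of_re_pos hw)]
  · simp_rw [div_eq_mul_inv, ← Complex.cpow_neg]
    exact ((differentiable_neg.const_cpow (.inl (Nat.cast_ne_zero.2 hn))).const_mul z
      ).differentiableOn

section Periodic

variable {c : ℕ → ℂ} {N : ℕ}

lemma norm_le_sum_range_norm_of_periodic (hN : 0 < N) (hc : Function.Periodic c N) (n : ℕ) :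
    ‖c n‖ ≤ ∑ j ∈ range N, ‖c j‖ :=
  hc.map_mod_nat n ▸ single_le_sum (fun j _ ↦ norm_nonneg (c j)) (mem_range.2 (Nat.mod_lt n hN))

lemma norm_sum_range_div_cpow_le (hN : 0 < N) (hc : Function.Periodic c N)
    (hc0 : ∑ j ∈ range N, c j = 0) (m : ℕ) {w : ℂ} (hw : 0 < w.re) :
    ‖∑ j ∈ range N, c ((m + 1) * N + j) / (((m + 1) * N + j : ℕ) : ℂ) ^ w‖ ≤
      N * (∑ j ∈ range N, ‖c j‖) * ‖w‖ * ((m : ℝ) + 1) ^ (-w.re - 1) := by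
  set X : ℝ := (((m + 1) * N : ℕ) : ℝ)
  have hmX : (m : ℝ) + 1 ≤ X := by
    simp only [X, Nat.cast_mul, Nat.cast_succ]
    nlinarith [(Nat.one_le_cast (α := ℝ)).2 hN, (m.cast_nonneg : (0 : ℝ) ≤ m)]
  have hshift : ∑ j ∈ range N, c ((m + 1) * N + j) / (((m + 1) * N + j : ℕ) : ℂ) ^ w =
      ∑ j ∈ range N, c j * (1 / (((m + 1) * N + j : ℕ) : ℝ) ^ w - 1 / (X : ℂ) ^ w) := by
    simp_rw [mul_sub, sum_sub_distrib, ← sum_mul, hc0, zero_mul, sub_zero, Complex.ofReal_natCast]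
    refine sum_congr rfl fun j _ ↦ ?_
    rw [mul_one_div, ← (hc.nat_mul (m + 1)) j, Nat.cast_id, add_comm]
  have hdiff (j : ℕ) (hj : j ∈ range N) :
      ‖1 / ((((m + 1) * N + j : ℕ) : ℝ) : ℂ) ^ w - 1 / (X : ℂ) ^ w‖ ≤
        ‖w‖ * ((m : ℝ) + 1) ^ (-w.re - 1) * N := by
    have hXj : (((m + 1) * N + j : ℕ) : ℝ) = X + j := by simp [X]
    refine (norm_one_div_ofReal_cpow_sub_le (by positivity)
      (hXj ▸ by linarith [j.cast_nonneg (α := ℝ)]) hmX (by linarith)).trans ?_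
    rw [hXj, add_sub_cancel_left, Nat.abs_cast]
    gcongr
    exact (mem_range.1 hj).le
  rw [hshift]
  calc _ ≤ ∑ j ∈ range N, ‖c j‖ * (‖w‖ * ((m : ℝ) + 1) ^ (-w.re - 1) * N) :=
        (norm_sum_le _ _).trans (sum_le_sum fun j hj ↦ by rw [norm_mul]; gcongr; exact hdiff j hj)
    _ = _ := by rw [← sum_mul]; ring

theorem tendsto_sum_range_div_cpow_of_periodic (hN : 0 < N) (hc : Function.Periodic c N)
    (hc0 : ∑ j ∈ range N, c j = 0) {g : ℂ → ℂ} (hg : DifferentiableOn ℂ g {w | 0 < w.re})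
    (h : ∀ w, 1 < w.re → HasSum (fun n ↦ c n / (n : ℂ) ^ w) (g w)) {w : ℂ} (hw : 0 < w.re) :
    Tendsto (fun M ↦ ∑ n ∈ range M, c n / (n : ℂ) ^ w) atTop (𝓝 (g w)) := by
  set B : ℕ → ℂ → ℂ := fun m w ↦ ∑ j ∈ range N, c (m * N + j) / ((m * N + j : ℕ) : ℂ) ^ w
  have hB_sum (w : ℂ) (M : ℕ) : ∑ m ∈ range M, B m w = ∑ n ∈ range (M * N), c n / (n : ℂ) ^ w :=
    (sum_range_mul_eq_sum_sum (fun n ↦ c n / (n : ℂ) ^ w) M N).symm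
  have hbound (m : ℕ) (w : ℂ) (hw : 0 < w.re) := norm_sum_range_div_cpow_le hN hc hc0 m hw
  have hmulN : Tendsto (· * N) atTop atTop := tendsto_id.atTop_mul_const' hN
  have hB : HasSum (fun m ↦ B m w) (g w) := by
    refine hasSum_of_forall_one_lt_re (f := B)
      (fun m ↦ DifferentiableOn.fun_sum fun j _ ↦ differentiableOn_div_natCast_cpow _ _) hg hbound
      (fun w hw ↦ ?_) hw
    have hsum : Summable fun m ↦ B (m + 1) w :=
      summable_of_norm_le_rpow (f := fun m ↦ B (m + 1)) hbound (by linarith)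
    refine ((summable_nat_add_iff (f := fun m ↦ B m w) 1).1 hsum).hasSum_iff_tendsto_nat.2 ?_
    simp_rw [hB_sum]
    exact (h w hw).tendsto_sum_nat.comp hmulN
  refine tendsto_sum_range_of_tendsto_sum_range_mul hN ?_
    (by simpa only [hB_sum] using hB.tendsto_sum_nat)
  refine squeeze_zero_norm' (a := fun n : ℕ ↦ (∑ j ∈ range N, ‖c j‖) * (n : ℝ) ^ (-w.re)) ?_ ?_
  · filter_upwards [eventually_gt_atTop 0] with n hn
    rw [norm_div, Complex.norm_natCast_cpow_of_pos hn, Real.rpow_neg n.cast_nonneg, div_eq_mul_inv]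
    gcongr
    exact norm_le_sum_range_norm_of_periodic hN hc n
  · simpa using ((tendsto_rpow_neg_atTop hw).comp tendsto_natCast_atTop_atTop).const_mul
      (∑ j ∈ range N, ‖c j‖)

end Periodic

lemma sum_range_sin_two_pi_mul_div_eq_zero (k : ℤ) (N : ℕ) :
    ∑ j ∈ range N, Real.sin (2 * π * (k / N) * j) = 0 := by
  set ζ := Complex.exp (↑(2 * π * (k / N)) * Complex.I)
  have hsin (j : ℕ) : Real.sin (2 * π * (k / N) * j) = (ζ ^ j).im := by
    rw [← Complex.exp_nat_mul, ← mul_assoc, mul_comm (j : ℂ), ← Complex.ofReal_natCast,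
      ← Complex.ofReal_mul, Complex.exp_ofReal_mul_I_im]
  have hζN : ζ ^ N = 1 := by
    rcases eq_or_ne N 0 with rfl | hN
    · exact pow_zero ζ
    rw [← Complex.exp_nat_mul, ← Complex.exp_int_mul_two_pi_mul_I k]
    congr 1
    push_cast
    field_simp
  simp_rw [hsin, ← Complex.im_sum]
  -- either `ζ = 1` and the sum is real, or the geometric sum vanishes
  have hgeom := geom_sum_mul ζ N
  rw [hζN, sub_self, mul_eq_zero, sub_eq_zero] at hgeom
  rcases hgeom with h | h
  · rw [h, Complex.zero_im]
  · simp [h]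

namespace HurwitzZeta

theorem hasSum_nat_hurwitzZetaOdd_of_mem_Ioo {a : ℝ} (ha : a ∈ Set.Ioo 0 1) {s : ℂ}
    (hs : 0 < s.re) :
    HasSum (fun n : ℕ ↦ (1 / (n + a : ℂ) ^ s - 1 / (n + 1 - a : ℂ) ^ s) / 2)
      (hurwitzZetaOdd a s) := by
  obtain ⟨ha0, ha1⟩ := ha
  suffices HasSum (fun n : ℕ ↦ (1 / ((n + a : ℝ) : ℂ) ^ s - 1 / ((n + 1 - a : ℝ) : ℂ) ^ s) / 2)
      (hurwitzZetaOdd a s) by exact_mod_cast this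
  refine hasSum_of_forall_one_lt_re
    (f := fun n w ↦ (1 / ((n + a : ℝ) : ℂ) ^ w - 1 / ((n + 1 - a : ℝ) : ℂ) ^ w) / 2) (C := 1 / 2)
    (fun n ↦ ?_)
    (differentiable_hurwitzZetaOdd a).differentiableOn (fun n w hw ↦ ?_)
    (fun w hw ↦ by exact_mod_cast hasSum_nat_hurwitzZetaOdd_of_mem_Icc ⟨ha0.le, ha1.le⟩ hw) hs
  · have hn : (0 : ℝ) ≤ n := n.cast_nonneg
    exact ((differentiable_one_div_cpow_sub (by positivity) (by linarith)).div_const 2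
      ).differentiableOn
  · rw [norm_div, Complex.norm_two, div_le_iff₀ two_pos]
    calc _ ≤ ‖w‖ * ((n : ℝ) + 1) ^ (-w.re - 1) * |((n + 1 : ℕ) + a : ℝ) - ((n + 1 : ℕ) + 1 - a)| :=
          norm_one_div_ofReal_cpow_sub_le (by positivity) (by push_cast; linarith)
            (by push_cast; linarith) (by linarith)
      _ ≤ ‖w‖ * ((n : ℝ) + 1) ^ (-w.re - 1) * 1 := by
          gcongr
          exact abs_le.2 ⟨by linarith, by linarith⟩
      _ = 1 / 2 * ‖w‖ * ((n : ℝ) + 1) ^ (-w.re - 1) * 2 := by ring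

theorem tendsto_sum_range_sinZeta (k : ℤ) {N : ℕ} (hN : 0 < N) {s : ℂ} (hs : 0 < s.re) :
    Tendsto (fun M ↦ ∑ n ∈ range M, (Real.sin (2 * π * (k / N) * n) : ℂ) / (n : ℂ) ^ s) atTop
      (𝓝 (sinZeta (k / N : ℝ) s)) := by
  refine tendsto_sum_range_div_cpow_of_periodic hN (fun n ↦ ?_) ?_
    (differentiableAt_sinZeta _).differentiableOn (fun w hw ↦ hasSum_nat_sinZeta _ hw) hs
  · have hN' : (N : ℝ) ≠ 0 := by positivity
    rw [Nat.cast_add, mul_add, show 2 * π * (k / N) * (N : ℝ) = k * (2 * π) by field_simp,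
      Real.sin_add_int_mul_two_pi]
  · exact_mod_cast sum_range_sin_two_pi_mul_div_eq_zero k N

lemma hasSum_nat_one_div_rpow_sub_rpow {a : ℝ} (ha : a ∈ Set.Ioo 0 1) {s : ℝ} (hs : 0 < s) :
    HasSum (fun n : ℕ ↦ 1 / ((n : ℝ) + a) ^ s - 1 / ((n : ℝ) + 1 - a) ^ s)
      (2 * (hurwitzZetaOdd a s).re) := by
  have h := Complex.hasSum_re
    ((hasSum_nat_hurwitzZetaOdd_of_mem_Ioo ha (s := s) (by simpa using hs)).mul_left 2)
  refine (h.congr_fun fun n ↦ ?_).trans_eq (by simp)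
  have hn : (0 : ℝ) ≤ n := n.cast_nonneg
  rw [mul_div_cancel₀ _ two_ne_zero,
    show (n + a : ℂ) = ((n + a : ℝ) : ℂ) by push_cast; rfl,
    show (n + 1 - a : ℂ) = ((n + 1 - a : ℝ) : ℂ) by push_cast; rfl,
    ← Complex.ofReal_cpow (by linarith [ha.1]), ← Complex.ofReal_cpow (by linarith [ha.2])]
  norm_cast

theorem tendsto_sum_range_sin_div_rpow (k : ℤ) {N : ℕ} (hN : 0 < N) {x : ℝ} (hx : 0 < x) :
    Tendsto (fun M ↦ ∑ n ∈ range M, Real.sin (2 * π * (k / N) * n) / (n : ℝ) ^ x) atTop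
      (𝓝 (sinZeta (k / N : ℝ) x).re) := by
  refine ((Complex.continuous_re.tendsto _).comp
    (tendsto_sum_range_sinZeta k hN (s := x) (by simpa using hx))).congr fun M ↦ ?_
  have hterm (n : ℕ) : ((Real.sin (2 * π * (k / N) * n) / (n : ℝ) ^ x : ℝ) : ℂ) =
      (Real.sin (2 * π * (k / N) * n) : ℂ) / (n : ℂ) ^ (x : ℂ) := by
    rw [Complex.ofReal_div, Complex.ofReal_cpow n.cast_nonneg, Complex.ofReal_natCast]
  simp only [Function.comp_apply, ← hterm, ← Complex.ofReal_sum, Complex.ofReal_re]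

lemma re_sinZeta_one_sub (a : UnitAddCircle) {s : ℝ} (hs : 0 < s) :
    (sinZeta a (1 - s)).re =
      2 * (2 * π) ^ (-s) * Real.Gamma s * Real.sin (π * s / 2) * (hurwitzZetaOdd a s).re := by
  have hs' (n : ℕ) : (s : ℂ) ≠ -n := fun h ↦ by
    have := congrArg Complex.re h
    simp only [Complex.ofReal_re, Complex.neg_re, Complex.natCast_re] at this
    linarith [n.cast_nonneg (α := ℝ)]
  have hfactor : 2 * (2 * π : ℂ) ^ (-(s : ℂ)) * Complex.Gamma s * Complex.sin (π * s / 2) =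
      ((2 * (2 * π) ^ (-s) * Real.Gamma s * Real.sin (π * s / 2) : ℝ) : ℂ) := by
    rw [Complex.ofReal_mul, Complex.ofReal_mul, Complex.ofReal_mul,
      Complex.ofReal_cpow (by positivity), Complex.Gamma_ofReal]
    push_cast
    ring
  rw [sinZeta_one_sub a hs', hfactor, Complex.re_ofReal_mul]

end HurwitzZeta

open HurwitzZeta in
theorem hasSum_one_div_rpow_sub_rpow_arith {k l : ℝ} (hk : 0 < k) (hkl : k < 2 * l) {s : ℝ}
    (hs : 0 < s) :
    HasSum (fun n : ℕ ↦ 1 / (2 * (n : ℝ) * l + k) ^ s - 1 / ((2 * (n : ℝ) + 2) * l - k) ^ s)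
      ((2 * l) ^ (-s) * (2 * (hurwitzZetaOdd (k / (2 * l) : ℝ) s).re)) := by
  have hl : 0 < 2 * l := hk.trans hkl
  have ha : k / (2 * l) ∈ Set.Ioo 0 1 := ⟨by positivity, (div_lt_one hl).2 hkl⟩
  refine ((hasSum_nat_one_div_rpow_sub_rpow ha hs).mul_left _).congr_fun fun n ↦ ?_
  have hn : (0 : ℝ) ≤ n := n.cast_nonneg
  have hl' : l ≠ 0 := by linarith
  have h1 : 2 * (n : ℝ) * l + k = 2 * l * (n + k / (2 * l)) := by field_simp
  have h2 : (2 * (n : ℝ) + 2) * l - k = 2 * l * (n + 1 - k / (2 * l)) := by field_simp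
  rw [h1, h2, Real.mul_rpow hl.le (by linarith [ha.1]), Real.mul_rpow hl.le (by linarith [ha.2]),
    Real.rpow_neg hl.le]
  field_simp

open HurwitzZeta in
/-- Malmstén's functional equation (second form). -/
theorem malmsten_functional_equation_two
    (k l : ℕ) (hk : 0 < k) (hkl : k < l) (s : ℝ) (hs0 : 0 < s) (hs1 : s < 1) :
    Summable (fun n : ℕ =>
        1 / (2 * (n : ℝ) * l + k) ^ s - 1 / ((2 * (n : ℝ) + 2) * l - k) ^ s) ∧
    ∃ R : ℝ,
      Tendsto (fun N : ℕ => ∑ n ∈ Finset.range N,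
          Real.sin ((n + 1) * k * π / l) / ((n : ℝ) + 1) ^ (1 - s))
        atTop (nhds R) ∧
      (∑' n : ℕ,
          (1 / (2 * (n : ℝ) * l + k) ^ s - 1 / ((2 * (n : ℝ) + 2) * l - k) ^ s))
        = (π / l) ^ s / (Real.sin (s * π / 2) * Real.Gamma s) * R := by
  have hl : (0 : ℝ) < l := by exact_mod_cast hk.trans hkl
  have hlhs := hasSum_one_div_rpow_sub_rpow_arith (k := k) (l := l) (by exact_mod_cast hk)
    (by exact_mod_cast (by omega : k < 2 * l)) hs0
  have hrhs := tendsto_sum_range_sin_div_rpow k (N := 2 * l) (by omega) (x := 1 - s) (by linarith)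
  simp only [Int.cast_natCast, Nat.cast_mul, Nat.cast_ofNat, Complex.ofReal_sub,
    Complex.ofReal_one] at hrhs
  refine ⟨hlhs.summable, _, (hrhs.comp (tendsto_add_atTop_nat 1)).congr fun M ↦ ?_, ?_⟩
  · rw [Function.comp_apply, sum_range_succ']
    simp only [Nat.cast_zero, mul_zero, Real.sin_zero, zero_div, add_zero, Nat.cast_add_one]
    refine sum_congr rfl fun n _ ↦ ?_
    congr 2
    field_simp
  · have hsin : Real.sin (π * s / 2) ≠ 0 :=
      (Real.sin_pos_of_pos_of_lt_pi (by positivity) (by nlinarith [pi_pos])).ne'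
    have hΓ : Real.Gamma s ≠ 0 := (Real.Gamma_pos_of_pos hs0).ne'
    have hscale : (π / l) ^ s * (2 * π) ^ (-s) = (2 * l) ^ (-s) := by
      rw [Real.rpow_neg (by positivity), Real.rpow_neg (by positivity),
        Real.div_rpow pi_pos.le hl.le,
        Real.mul_rpow two_pos.le pi_pos.le, Real.mul_rpow two_pos.le hl.le]
      field_simp
    rw [hlhs.tsum_eq, re_sinZeta_one_sub _ hs0, mul_comm s π, ← hscale]
    field_simp
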